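/- arXiv:2406.11478 — 3 statements merged into one kernel-verified Lean document; each statement's English description precedes it below -/
import Mathlib

section
/- Let δt > 0, T > 0 a multiple of δt, α > 0. Define f_{δt}(σ) = 1 + (δt/α)·(1 − e^{2Tσ})/(1 − e^{2δtσ}) and f(σ) = 1 + (e^{2Tσ} − 1)/(2ασ) for σ < 0. Then for all σ ≤ −8, f_{δt}(σ)/f(σ) > 1. -/
/-- For `δt > 0`, `α > 0`, `T > 0` a multiple of `δt`, and `σ ≤ -8`, the ratio of the
implicit-Euler eigenvalue `f_{δt}(σ) = 1 + (δt/α)(1 - e^{2Tσ})/(1 - e^{2δtσ})` to the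
continuous eigenvalue `f(σ) = 1 + (e^{2Tσ} - 1)/(2ασ)` exceeds 1. -/
theorem ratio_gt_one (δt T α σ : ℝ) (hδt : 0 < δt) (hT : 0 < T)
    (hmul : ∃ n : ℕ, 0 < n ∧ T = n * δt) (hα : 0 < α) (hσ : σ ≤ -8) :
    (1 + (δt / α) * ((1 - Real.exp (2 * T * σ)) / (1 - Real.exp (2 * δt * σ)))) /
      (1 + (Real.exp (2 * T * σ) - 1) / (2 * α * σ)) > 1 := by
  have hσ0 : σ < 0 := by linarith
  set E := Real.exp (2 * T * σ) with hEdef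
  set e := Real.exp (2 * δt * σ) with hedef
  have hE0 : 0 < E := Real.exp_pos _
  have hE1 : E < 1 := by
    rw [hEdef, Real.exp_lt_one_iff]; nlinarith
  have he1 : e < 1 := by
    rw [hedef, Real.exp_lt_one_iff]; nlinarith
  have h1E : 0 < 1 - E := by linarith
  have h1e : 0 < 1 - e := by linarith
  have key : 1 - e < -(2 * δt * σ) := by
    have h := Real.add_one_lt_exp (x := 2 * δt * σ) (by nlinarith)
    rw [← hedef] at h
    linarith
  -- denominator is positive
  have hden : 0 < 1 + (E - 1) / (2 * α * σ) := by
    have : 0 < (E - 1) / (2 * α * σ) :=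
      div_pos_of_neg_of_neg (by linarith) (by nlinarith)
    linarith
  rw [gt_iff_lt, lt_div_iff₀ hden, one_mul]
  have hrw : (E - 1) / (2 * α * σ) = (1 - E) / (-(2 * α * σ)) := by
    rw [div_neg, ← neg_div, neg_sub]
  rw [hrw]
  have hstep : (1 - E) / (-(2 * α * σ)) < δt / α * ((1 - E) / (1 - e)) := by
    rw [div_mul_div_comm, div_lt_div_iff₀ (by nlinarith) (by positivity)]
    nlinarith [mul_lt_mul_of_pos_left key (mul_pos h1E hα)]
  linarith
end

section
/- With L = [[0, I], [−A, 0]] (A symmetric positive definite) and B = [0; I], the matrix e^{sL}BB^Te^{sL^T} equals the 2×2 block matrix with blocks C₁₁(s) = A^{−1}sin²(sA^{1/2}), C₁₂(s) = C₂₁(s) = A^{−1/2}cos(sA^{1/2})sin(sA^{1/2}), C₂₂(s) = cos²(sA^{1/2}). -/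
open scoped Matrix

variable {n : ℕ}

/-- Matrix cosine, defined by its power series. -/
noncomputable def mcos (M : Matrix (Fin n) (Fin n) ℝ) : Matrix (Fin n) (Fin n) ℝ :=
  ∑' k : ℕ, ((-1 : ℝ) ^ k / (Nat.factorial (2 * k) : ℝ)) • M ^ (2 * k)

/-- Matrix sine, defined by its power series. -/
noncomputable def msin (M : Matrix (Fin n) (Fin n) ℝ) : Matrix (Fin n) (Fin n) ℝ :=
  ∑' k : ℕ, ((-1 : ℝ) ^ k / (Nat.factorial (2 * k + 1) : ℝ)) • M ^ (2 * k + 1)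

/-!
Conjugating by `diag(S, 1)` turns `s • L` into `[[0, sS], [-sS, 0]]`, whose exponential is
`[[cos sS, sin sS], [-sin sS, cos sS]]`: split the exponential series into even and odd terms.
Hence `e^{sL} B = [S⁻¹ sin sS; cos sS]`, and the blocks of its Gram matrix follow because
`S⁻¹`, `cos sS` and `sin sS` are symmetric and pairwise commute.
-/

open Matrix

theorem summable_neg_one_pow_div_factorial_smul_pow {𝔸 : Type*} [NormedRing 𝔸]
    [NormedAlgebra ℝ 𝔸] [CompleteSpace 𝔸] (x : 𝔸) {g : ℕ → ℕ} (hg : g.Injective) :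
    Summable fun k : ℕ => ((-1 : ℝ) ^ k / ((g k).factorial : ℝ)) • x ^ g k :=
  .of_norm_bounded ((NormedSpace.norm_expSeries_summable' (𝕂 := ℝ) x).comp_injective hg)
    fun k => by simp [norm_smul, div_eq_mul_inv]

section SeriesOfMatrices

-- Used only to obtain summability; the statements below depend on the topology alone.
attribute [local instance] Matrix.linftyOpNormedRing Matrix.linftyOpNormedAlgebra

theorem hasSum_mcos (M : Matrix (Fin n) (Fin n) ℝ) :
    HasSum (fun k : ℕ => ((-1 : ℝ) ^ k / ((2 * k).factorial : ℝ)) • M ^ (2 * k)) (mcos M) :=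
  (summable_neg_one_pow_div_factorial_smul_pow M fun _ _ h => by omega).hasSum

theorem hasSum_msin (M : Matrix (Fin n) (Fin n) ℝ) :
    HasSum (fun k : ℕ => ((-1 : ℝ) ^ k / ((2 * k + 1).factorial : ℝ)) • M ^ (2 * k + 1))
      (msin M) :=
  (summable_neg_one_pow_div_factorial_smul_pow M fun _ _ h => by omega).hasSum

end SeriesOfMatrices

theorem mcos_transpose (M : Matrix (Fin n) (Fin n) ℝ) : (mcos M)ᵀ = mcos Mᵀ := by
  simp only [mcos, transpose_tsum, transpose_smul, transpose_pow]

theorem msin_transpose (M : Matrix (Fin n) (Fin n) ℝ) : (msin M)ᵀ = msin Mᵀ := by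
  simp only [msin, transpose_tsum, transpose_smul, transpose_pow]

theorem Commute.mcos_right {X M : Matrix (Fin n) (Fin n) ℝ} (h : Commute X M) :
    Commute X (mcos M) :=
  .tsum_right _ fun _ => (h.pow_right _).smul_right _

theorem Commute.msin_right {X M : Matrix (Fin n) (Fin n) ℝ} (h : Commute X M) :
    Commute X (msin M) :=
  .tsum_right _ fun _ => (h.pow_right _).smul_right _

theorem HasSum.matrix_fromBlocks {X l m n o R : Type*} [AddCommMonoid R] [TopologicalSpace R]
    {A : X → Matrix n l R} {B : X → Matrix n m R} {C : X → Matrix o l R}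
    {D : X → Matrix o m R} {a : Matrix n l R} {b : Matrix n m R} {c : Matrix o l R}
    {d : Matrix o m R} (hA : HasSum A a) (hB : HasSum B b) (hC : HasSum C c)
    (hD : HasSum D d) :
    HasSum (fun x => fromBlocks (A x) (B x) (C x) (D x)) (fromBlocks a b c d) := by
  refine Pi.hasSum.mpr fun i => Pi.hasSum.mpr fun j => ?_
  rcases i with i | i <;> rcases j with j | j
  · exact Pi.hasSum.mp (Pi.hasSum.mp hA i) j
  · exact Pi.hasSum.mp (Pi.hasSum.mp hB i) j
  · exact Pi.hasSum.mp (Pi.hasSum.mp hC i) j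
  · exact Pi.hasSum.mp (Pi.hasSum.mp hD i) j

section PowersOfRotationGenerator

variable {m R : Type*} [Fintype m] [DecidableEq m] [CommRing R]

theorem fromBlocks_zero_neg_zero_pow_two_mul (T : Matrix m m R) (k : ℕ) :
    fromBlocks 0 T (-T) 0 ^ (2 * k) =
      (-1 : R) ^ k • fromBlocks (T ^ (2 * k)) 0 0 (T ^ (2 * k)) := by
  have hsq : fromBlocks 0 T (-T) 0 ^ 2 = (-1 : R) • fromBlocks (T ^ 2) 0 0 (T ^ 2) := by
    simp [sq, fromBlocks_multiply, fromBlocks_neg]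
  induction k with
  | zero => simp [fromBlocks_one]
  | succ k ih =>
    rw [mul_add, pow_add, ih, mul_one, hsq, smul_mul_smul_comm, ← pow_succ, fromBlocks_multiply]
    simp [pow_add]

theorem fromBlocks_zero_neg_zero_pow_two_mul_add_one (T : Matrix m m R) (k : ℕ) :
    fromBlocks 0 T (-T) 0 ^ (2 * k + 1) =
      (-1 : R) ^ k • fromBlocks 0 (T ^ (2 * k + 1)) (-T ^ (2 * k + 1)) 0 := by
  rw [pow_succ, fromBlocks_zero_neg_zero_pow_two_mul]
  simp [fromBlocks_multiply, pow_succ]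

end PowersOfRotationGenerator

theorem exp_fromBlocks_zero_neg_zero (T : Matrix (Fin n) (Fin n) ℝ) :
    NormedSpace.exp (fromBlocks 0 T (-T) 0) =
      fromBlocks (mcos T) (msin T) (-msin T) (mcos T) := by
  have heven := (hasSum_mcos T).matrix_fromBlocks hasSum_zero hasSum_zero (hasSum_mcos T)
  have hodd := hasSum_zero.matrix_fromBlocks (hasSum_msin T) (hasSum_msin T).neg hasSum_zero
  rw [NormedSpace.exp_eq_tsum (𝕂 := ℝ)]
  refine HasSum.tsum_eq ?_
  rw [show fromBlocks (mcos T) (msin T) (-msin T) (mcos T) =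
      fromBlocks (mcos T) 0 0 (mcos T) + fromBlocks 0 (msin T) (-msin T) 0 by
    simp [fromBlocks_add]]
  refine HasSum.even_add_odd (heven.congr_fun fun k => ?_) (hodd.congr_fun fun k => ?_)
  · rw [fromBlocks_zero_neg_zero_pow_two_mul, smul_smul, fromBlocks_smul]
    simp [div_eq_inv_mul]
  · rw [fromBlocks_zero_neg_zero_pow_two_mul_add_one, smul_smul, fromBlocks_smul]
    simp [div_eq_inv_mul]

theorem exp_smul_fromBlocks_mul_fromRows {S : Matrix (Fin n) (Fin n) ℝ} (hS : IsUnit S.det)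
    (s : ℝ) :
    NormedSpace.exp
        (s • (fromBlocks 0 1 (-S ^ 2) 0 : Matrix (Fin n ⊕ Fin n) (Fin n ⊕ Fin n) ℝ)) *
        (fromRows 0 1 : Matrix (Fin n ⊕ Fin n) (Fin n) ℝ) =
      fromRows (S⁻¹ * msin (s • S)) (mcos (s • S)) := by
  set U : Matrix (Fin n ⊕ Fin n) (Fin n ⊕ Fin n) ℝ := fromBlocks S 0 0 1
  have hU_left : fromBlocks S⁻¹ 0 0 1 * U = 1 := by
    simp [U, fromBlocks_multiply, nonsing_inv_mul _ hS, fromBlocks_one]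
  have hU_inv : U⁻¹ = fromBlocks S⁻¹ 0 0 1 := inv_eq_left_inv hU_left
  have hU : IsUnit U := (isUnit_iff_isUnit_det U).mpr (isUnit_det_of_left_inverse hU_left)
  have hconj :
      s • fromBlocks 0 1 (-S ^ 2) 0 = U⁻¹ * fromBlocks 0 (s • S) (-(s • S)) 0 * U := by
    simp [hU_inv, U, fromBlocks_multiply, fromBlocks_smul, nonsing_inv_mul _ hS, sq]
  have hU_mul : U * (fromRows 0 1 : Matrix (Fin n ⊕ Fin n) (Fin n) ℝ) = fromRows 0 1 := by
    simp [U, fromBlocks_mul_fromRows]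
  rw [hconj, exp_conj' U _ hU, Matrix.mul_assoc (U⁻¹ * _), hU_mul,
    exp_fromBlocks_zero_neg_zero, hU_inv]
  simp [Matrix.mul_assoc, fromBlocks_mul_fromRows]

theorem exp_BBt_exp_blocks_general (A S : Matrix (Fin n) (Fin n) ℝ)
    (hS : S.PosDef) (hS2 : S ^ 2 = A) (s : ℝ) :
    let L : Matrix (Fin n ⊕ Fin n) (Fin n ⊕ Fin n) ℝ :=
      Matrix.fromBlocks 0 1 (-A) 0
    let B : Matrix (Fin n ⊕ Fin n) (Fin n) ℝ := Matrix.fromRows 0 1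
    NormedSpace.exp (s • L) * B * Bᵀ * (NormedSpace.exp (s • L))ᵀ =
      Matrix.fromBlocks
        (A⁻¹ * msin (s • S) ^ 2)
        (S⁻¹ * (mcos (s • S) * msin (s • S)))
        (S⁻¹ * (mcos (s • S) * msin (s • S)))
        (mcos (s • S) ^ 2) := by
  intro L B
  subst hS2
  have hdet : IsUnit S.det := (isUnit_iff_isUnit_det S).mp hS.isUnit
  have hS_symm : Sᵀ = S := isHermitian_iff_isSymm.mp hS.isHermitian
  have hinv_comm : Commute S⁻¹ (s • S) := by
    refine Commute.smul_right ?_ s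
    rw [Commute, SemiconjBy, nonsing_inv_mul _ hdet, mul_nonsing_inv _ hdet]
  have hcos : Commute S⁻¹ (mcos (s • S)) := hinv_comm.mcos_right
  have hsin : Commute S⁻¹ (msin (s • S)) := hinv_comm.msin_right
  have hcos_sin : Commute (mcos (s • S)) (msin (s • S)) :=
    (Commute.refl _).mcos_right.symm.msin_right
  calc NormedSpace.exp (s • L) * B * Bᵀ * (NormedSpace.exp (s • L))ᵀ
      = (NormedSpace.exp (s • L) * B) * (NormedSpace.exp (s • L) * B)ᵀ := by
        rw [transpose_mul]; simp only [Matrix.mul_assoc]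
    _ = _ := by
        rw [show NormedSpace.exp (s • L) * B = _ from exp_smul_fromBlocks_mul_fromRows hdet s,
          transpose_fromRows, fromRows_mul_fromCols,
          transpose_mul, transpose_nonsing_inv, mcos_transpose, msin_transpose, transpose_smul,
          hS_symm]
        congr 1
        · rw [← inv_pow', ← hsin.mul_pow, sq, ← hsin.eq]
        · rw [Matrix.mul_assoc, hcos_sin.eq]
        · rw [← Matrix.mul_assoc, ← (hcos.mul_right hsin).eq]
        · rw [sq]

/-- For `L = [[0, I], [-A, 0]]`, `B = [0; I]`, and `S = A^{1/2}`,
`e^{sL} B Bᵀ e^{sLᵀ}` has blocks `C₁₁ = A⁻¹ sin²(sS)`, `C₁₂ = C₂₁ = S⁻¹ cos(sS) sin(sS)`,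
`C₂₂ = cos²(sS)`. -/
theorem exp_BBt_exp_blocks (A S : Matrix (Fin n) (Fin n) ℝ)
    (hA : A.PosDef) (hS : S.PosDef) (hS2 : S ^ 2 = A) (s : ℝ) :
    let L : Matrix (Fin n ⊕ Fin n) (Fin n ⊕ Fin n) ℝ :=
      Matrix.fromBlocks 0 1 (-A) 0
    let B : Matrix (Fin n ⊕ Fin n) (Fin n) ℝ := Matrix.fromRows 0 1
    NormedSpace.exp (s • L) * B * Bᵀ * (NormedSpace.exp (s • L))ᵀ =
      Matrix.fromBlocks
        (A⁻¹ * msin (s • S) ^ 2)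
        (S⁻¹ * (mcos (s • S) * msin (s • S)))
        (S⁻¹ * (mcos (s • S) * msin (s • S)))
        (mcos (s • S) ^ 2) :=
  exp_BBt_exp_blocks_general A S hS hS2 s
end

section
/- For scalars σ > 0, T > 0, α > 0, define the 2×2 matrix m(σ) with entries m₁₁ = 1 + T/(2ασ) − sin(2T√σ)/(4ασ^{3/2}), m₁₂ = m₂₁ = (1 − cos(2T√σ))/(2ασ), m₂₂ = 1 + T/(2α) + sin(2T√σ)/(4α√σ). Then as σ → ∞, det m(σ)·4α²σ/((2α+T)(T + 2ασ)) → 1; i.e. H(σ) := det m(σ) ~ (2α+T)(T + 2ασ)/(4α²σ). -/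
open Filter Real

lemma aux_div_tendsto_zero (u v : ℝ → ℝ) (C : ℝ)
    (hu : ∀ σ, |u σ| ≤ C) (hv : Tendsto v atTop atTop) :
    Tendsto (fun σ => u σ / v σ) atTop (nhds 0) := by
  apply squeeze_zero_norm' (a := fun σ => C / v σ)
  · filter_upwards [hv.eventually_gt_atTop 0] with σ hσ
    rw [Real.norm_eq_abs, abs_div, abs_of_pos hσ]
    gcongr
    exact hu σ
  · exact tendsto_const_nhds.div_atTop hv

/-- For the scalar wave-equation optimality matrix `m(σ)`, the determinant satisfies
`H(σ) = det m(σ) ~ (2α+T)(T + 2ασ)/(4α²σ)` as `σ → ∞`, i.e.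
`det m(σ)·4α²σ/((2α+T)(T + 2ασ)) → 1`. -/
theorem wave_det_asymptotics (T α : ℝ) (hT : 0 < T) (hα : 0 < α) :
    Tendsto (fun σ : ℝ =>
        (Matrix.det !![1 + T / (2 * α * σ) - Real.sin (2 * T * Real.sqrt σ) / (4 * α * σ ^ ((3 : ℝ) / 2)),
            (1 - Real.cos (2 * T * Real.sqrt σ)) / (2 * α * σ);
            (1 - Real.cos (2 * T * Real.sqrt σ)) / (2 * α * σ),
            1 + T / (2 * α) + Real.sin (2 * T * Real.sqrt σ) / (4 * α * Real.sqrt σ)]) *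
          (4 * α ^ 2 * σ) / ((2 * α + T) * (T + 2 * α * σ)))
      atTop (nhds 1) := by
  have h2α : (0:ℝ) < 2 * α := by linarith
  have hsum : (0:ℝ) < 2 * α + T := by linarith
  have hσ_top : Tendsto (fun σ : ℝ => 2 * α * σ) atTop atTop :=
    Tendsto.const_mul_atTop h2α tendsto_id
  have hT0 : Tendsto (fun σ : ℝ => T / (2 * α * σ)) atTop (nhds 0) :=
    tendsto_const_nhds.div_atTop hσ_top
  have hsqrt_top : Tendsto Real.sqrt atTop atTop := by
    have h : Real.sqrt = fun x : ℝ => x ^ ((1:ℝ)/2) := funext Real.sqrt_eq_rpow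
    rw [h]
    exact tendsto_rpow_atTop (by norm_num)
  have hsin1 : Tendsto (fun σ : ℝ =>
      Real.sin (2 * T * Real.sqrt σ) / (4 * α * σ ^ ((3:ℝ)/2))) atTop (nhds 0) := by
    apply aux_div_tendsto_zero _ _ 1 (fun σ => Real.abs_sin_le_one _)
    exact Tendsto.const_mul_atTop (by positivity) (tendsto_rpow_atTop (by norm_num))
  have hcosb : ∀ x : ℝ, |1 - Real.cos x| ≤ 2 := by
    intro x
    have h1 := Real.neg_one_le_cos x
    have h2 := Real.cos_le_one x
    rw [abs_le]; constructor <;> linarith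
  have hb : Tendsto (fun σ : ℝ =>
      (1 - Real.cos (2 * T * Real.sqrt σ)) / (2 * α * σ)) atTop (nhds 0) :=
    aux_div_tendsto_zero _ _ 2 (fun σ => hcosb _) hσ_top
  have hsin2 : Tendsto (fun σ : ℝ =>
      Real.sin (2 * T * Real.sqrt σ) / (4 * α * Real.sqrt σ)) atTop (nhds 0) := by
    apply aux_div_tendsto_zero _ _ 1 (fun σ => Real.abs_sin_le_one _)
    exact Tendsto.const_mul_atTop (by positivity) hsqrt_top
  have hg : Tendsto (fun σ : ℝ => 4 * α ^ 2 * σ / ((2 * α + T) * (T + 2 * α * σ)))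
      atTop (nhds (2 * α / (2 * α + T))) := by
    have hTσ : Tendsto (fun σ : ℝ => T / σ) atTop (nhds 0) :=
      tendsto_const_nhds.div_atTop tendsto_id
    have hne : (2 * α + T) * ((0:ℝ) + 2 * α) ≠ 0 := by positivity
    have h1 : Tendsto (fun σ : ℝ => 4 * α ^ 2 / ((2 * α + T) * (T / σ + 2 * α))) atTop
        (nhds (4 * α ^ 2 / ((2 * α + T) * (0 + 2 * α)))) :=
      tendsto_const_nhds.div (tendsto_const_nhds.mul (hTσ.add tendsto_const_nhds)) hne
    have heq : (fun σ : ℝ => 4 * α ^ 2 / ((2 * α + T) * (T / σ + 2 * α)))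
        =ᶠ[atTop] (fun σ : ℝ => 4 * α ^ 2 * σ / ((2 * α + T) * (T + 2 * α * σ))) := by
      filter_upwards [eventually_gt_atTop (0:ℝ)] with σ hσ
      have hσ' : σ ≠ 0 := ne_of_gt hσ
      field_simp
      try ring
    have hval : 4 * α ^ 2 / ((2 * α + T) * ((0:ℝ) + 2 * α)) = 2 * α / (2 * α + T) := by
      field_simp
      try ring
    rw [hval] at h1
    exact h1.congr' heq
  have hA : Tendsto (fun σ : ℝ =>
      1 + T / (2 * α * σ) - Real.sin (2 * T * Real.sqrt σ) / (4 * α * σ ^ ((3:ℝ)/2)))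
      atTop (nhds 1) := by
    have := ((tendsto_const_nhds (x := (1:ℝ))).add hT0).sub hsin1
    simpa using this
  have hD : Tendsto (fun σ : ℝ =>
      1 + T / (2 * α) + Real.sin (2 * T * Real.sqrt σ) / (4 * α * Real.sqrt σ))
      atTop (nhds (1 + T / (2 * α))) := by
    have := (tendsto_const_nhds (x := 1 + T / (2 * α))).add hsin2
    simpa using this
  have hmain := (((hA.mul hD).sub (hb.mul hb)).mul hg)
  have hlim : (1 * (1 + T / (2 * α)) - 0 * 0) * (2 * α / (2 * α + T)) = 1 := by
    field_simp
    try ring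
  rw [hlim] at hmain
  simp only [Matrix.det_fin_two_of]
  convert hmain using 2 with σ
  ring
end
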